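/- arXiv:1904.10759 — 3 statements merged into one kernel-verified Lean document; each statement's English description precedes it below -/
import Mathlib

section
/- Insertion preserves Cantor normal form: if a and b are trees with isCNF a and isCNF b, then isCNF (insert a b). -/
namespace CNFOrd

/-- Binary trees: `omega a b` represents the ordinal `ω^a + b`. -/
inductive T : Type
  | zero : T
  | omega : T → T → T
  deriving DecidableEq

namespace T

/-- The strict order on trees. -/
inductive Lt : T → T → Prop
  | lt1 {a b : T} : Lt zero (omega a b)
  | lt2 {a b c d : T} : Lt a c → Lt (omega a b) (omega c d)
  | lt3 {a b c d : T} : a = c → Lt b d → Lt (omega a b) (omega c d)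

/-- `a ≥ b` means `b < a` or `a = b`. -/
def Ge (a b : T) : Prop := Lt b a ∨ a = b

/-- First exponent of a tree. -/
def fst : T → T
  | zero => zero
  | omega a _ => a

/-- The predicate of being in Cantor normal form. -/
inductive isCNF : T → Prop
  | zero : isCNF zero
  | omega {a b : T} : isCNF a → isCNF b → Ge a (fst b) → isCNF (omega a b)

/-- Decidability of the strict order. -/
def decLt : (a b : T) → Decidable (Lt a b)
  | _, zero => isFalse fun h => nomatch h
  | zero, omega _ _ => isTrue .lt1
  | omega a b, omega c d =>
    match decLt a c with
    | isTrue h => isTrue (.lt2 h)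
    | isFalse h1 =>
      if he : a = c then
        match decLt b d with
        | isTrue h2 => isTrue (.lt3 he h2)
        | isFalse h2 => isFalse fun h => by
            cases h with
            | lt2 h' => exact h1 h'
            | lt3 _ h2' => exact h2 h2'
      else isFalse fun h => by
            cases h with
            | lt2 h' => exact h1 h'
            | lt3 he' _ => exact he he'

instance : ∀ a b : T, Decidable (Lt a b) := decLt

/-- List insertion. -/
def insert (a : T) : T → T
  | zero => omega a zero
  | omega b c => if Lt a b then omega b (insert a c) else omega a (omega b c)

/-- The permutation congruence: smallest equivalence relation which is a
congruence for `omega` and satisfies the swap rule. -/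
inductive Perm : T → T → Prop
  | refl (a : T) : Perm a a
  | symm {a b : T} : Perm a b → Perm b a
  | trans {a b c : T} : Perm a b → Perm b c → Perm a c
  | congr {a a' b b' : T} : Perm a a' → Perm b b' → Perm (omega a b) (omega a' b')
  | swap (a b c : T) : Perm (omega a (omega b c)) (omega b (omega a c))

instance permSetoid : Setoid T := ⟨Perm, ⟨Perm.refl, Perm.symm, Perm.trans⟩⟩

/-- Hessenberg sum. -/
def oplus : T → T → T
  | zero, y => y
  | omega a b, y => omega a (oplus b y)

/-- Ordinal addition. -/
def add : T → T → T
  | zero, b => b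
  | a, zero => a
  | omega a c, omega b d => if Lt a b then omega b d else omega a (add c (omega b d))

/-- Ordinal multiplication. -/
def mul : T → T → T
  | zero, _ => zero
  | _, zero => zero
  | a, omega zero d => add a (mul a d)
  | omega a c, omega b d => omega (add a b) (mul (omega a c) d)

end T

end CNFOrd

namespace CNFOrd.T

theorem lt_trichotomy : ∀ a b : T, Lt a b ∨ a = b ∨ Lt b a
  | zero, zero => .inr (.inl rfl)
  | zero, omega _ _ => .inl .lt1
  | omega _ _, zero => .inr (.inr .lt1)
  | omega a c, omega b d => by
    rcases lt_trichotomy a b with hab | rfl | hba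
    · exact .inl (.lt2 hab)
    · rcases lt_trichotomy c d with hcd | rfl | hdc
      · exact .inl (.lt3 rfl hcd)
      · exact .inr (.inl rfl)
      · exact .inr (.inr (.lt3 rfl hdc))
    · exact .inr (.inr (.lt2 hba))

theorem ge_of_not_lt {a b : T} (h : ¬ Lt a b) : Ge a b := by
  rcases lt_trichotomy a b with hab | rfl | hba
  · exact absurd hab h
  · exact .inr rfl
  · exact .inl hba

theorem fst_insert (a c : T) : fst (insert a c) = a ∨ fst (insert a c) = fst c := by
  cases c with
  | zero => exact .inl rfl
  | omega d e =>
    by_cases h : Lt a d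
    · exact .inr (by simp only [insert, h, if_true, fst])
    · exact .inl (by simp only [insert, h, if_false, fst])

theorem ge_fst_insert {a b c : T} (hab : Lt a b) (hbc : Ge b (fst c)) :
    Ge b (fst (insert a c)) := by
  rcases fst_insert a c with h | h <;> rw [h]
  exacts [.inl hab, hbc]

end CNFOrd.T

open CNFOrd T in
/-- insertion preserves Cantor normal form. -/
theorem isCNF_insert : ∀ a b : T, isCNF a → isCNF b → isCNF (T.insert a b) := by
  intro a b ha hb
  induction hb with
  | zero => exact .omega ha .zero (ge_of_not_lt nofun)
  | @omega p q hp hq hpq _ ihq =>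
    rw [T.insert]
    split_ifs with hap
    · exact .omega hp ihq (ge_fst_insert hap hpq)
    · exact .omega ha (.omega hp hq hpq) (ge_of_not_lt hap)
end

section
/- Transfinite induction holds for Cantor normal forms (Theorem 5.1): the strict order < restricted to the subtype {t : Tree // isCNF t} is well-founded; equivalently, for every predicate P on this subtype, if for every x, (∀ y, y < x → P y) implies P x, then P x holds for every x. -/
/-! Read `omega a b` as the ordinal `ω ^ a + b`. On Cantor normal forms this evaluation is strictly
monotone, so `Lt` there is a subrelation of the pullback of the well-founded `<` on ordinals.
Monotonicity in the `lt2` case needs that a normal form whose exponents are at most `a` evaluates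
below `ω ^ (a + 1)`; that bound in turn needs monotonicity on exponents, so the two facts are proved
together by induction on `isCNF`. -/

namespace CNFOrd.T

open Ordinal

noncomputable def eval : T → Ordinal.{0}
  | zero => 0
  | omega a b => ω ^ eval a + eval b

theorem eval_zero_lt_eval_omega (a b : T) : eval zero < eval (omega a b) :=
  (opow_pos _ omega0_pos).trans_le le_self_add

theorem eval_omega_lt_opow_succ {a b : T} {o : Ordinal} (ha : eval a ≤ o)
    (hb : eval b < ω ^ (o + 1)) : eval (omega a b) < ω ^ (o + 1) :=
  isPrincipal_add_omega0_opow _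
    ((opow_lt_opow_iff_right one_lt_omega0).2 (Order.lt_add_one_iff.2 ha)) hb

private theorem eval_lt_eval_and_lt_opow_succ {s : T} (hs : isCNF s) :
    (∀ t, isCNF t → Lt s t → eval s < eval t) ∧
      ∀ a, isCNF a → Ge a (fst s) → eval s < ω ^ (eval a + 1) := by
  induction hs with
  | zero =>
    refine ⟨fun t _ hlt => ?_, fun a _ _ => opow_pos _ omega0_pos⟩
    cases hlt
    exact eval_zero_lt_eval_omega _ _
  | @omega e b he _ heb ihe ihb =>
    have bound : ∀ a, isCNF a → Ge a e → eval (omega e b) < ω ^ (eval a + 1) := by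
      intro a ha hea
      have hle : eval e ≤ eval a := by
        rcases hea with hlt | rfl
        exacts [(ihe.1 a ha hlt).le, le_rfl]
      exact eval_omega_lt_opow_succ hle ((ihb.2 e he heb).trans_le
        (opow_le_opow_right omega0_pos (add_le_add_left hle 1)))
    refine ⟨fun t ht hlt => ?_, bound⟩
    cases hlt with
    | lt2 hec =>
      cases ht with | omega hc _ _ =>
      calc eval (omega e b) < ω ^ (eval e + 1) := bound e he (Or.inr rfl)
        _ ≤ ω ^ eval _ := opow_le_opow_right omega0_pos (Order.add_one_le_of_lt (ihe.1 _ hc hec))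
        _ ≤ eval (omega _ _) := le_self_add
    | lt3 hec hbd =>
      cases ht with | omega _ hd _ =>
      subst hec
      exact add_lt_add_right (ihb.1 _ hd hbd) _

theorem eval_lt_eval {s t : T} (hs : isCNF s) (ht : isCNF t) (h : Lt s t) :
    eval s < eval t :=
  (eval_lt_eval_and_lt_opow_succ hs).1 t ht h

theorem wellFounded_lt_isCNF :
    WellFounded (fun x y : {t : T // isCNF t} => Lt x.val y.val) :=
  Subrelation.wf (fun {x y} h => eval_lt_eval x.2 y.2 h)
    (InvImage.wf (fun x : {t : T // isCNF t} => eval x.val) Ordinal.lt_wf)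

end CNFOrd.T

open CNFOrd T in
/-- transfinite induction holds for Cantor normal forms: the strict
order on the subtype is well-founded, equivalently every inductive predicate holds
everywhere. -/
theorem transfinite_induction :
    WellFounded (fun x y : {t : T // isCNF t} => Lt x.val y.val) ∧
    ∀ P : {t : T // isCNF t} → Prop,
      (∀ x, (∀ y, Lt y.val x.val → P y) → P x) → ∀ x, P x :=
  ⟨wellFounded_lt_isCNF, fun _ h x => wellFounded_lt_isCNF.induction x h⟩
end

section
/- There is no strictly descending sequence of Cantor normal forms (Corollary 5.4): there is no f : ℕ → {t : Tree // isCNF t} such that f (i+1) < f i for every i. -/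
/-!
Interpret a tree `ω^ a + b` as the ordinal `ω ^ a + b`. On Cantor normal forms this interpretation
is strictly monotone, so a strictly descending sequence of normal forms would give a strictly
descending sequence of ordinals. The one subtle point is the bound `ω ^ a + b < ω ^ (a + 1)` for a
normal form `ω^ a + b`: when `fst b < a` it comes from `b < ω^ a + 0`, i.e. from monotonicity at
`b`, so bound and monotonicity are proved together by induction on `isCNF`.
-/

namespace CNFOrd.T

open Ordinal

noncomputable def toOrdinal : T → Ordinal.{0}
  | zero => 0
  | omega a b => ω ^ toOrdinal a + toOrdinal b

theorem isCNF_omega_zero {a : T} (ha : isCNF a) : isCNF (omega a zero) :=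
  .omega ha .zero <| by cases a <;> [exact .inr rfl; exact .inl .lt1]

theorem toOrdinal_lt_and_lt_of_isCNF {s : T} (hs : isCNF s) :
    toOrdinal s < ω ^ (toOrdinal (fst s) + 1) ∧
      ∀ {t : T}, isCNF t → Lt s t → toOrdinal s < toOrdinal t := by
  induction hs with
  | zero =>
    refine ⟨opow_pos _ omega0_pos, fun {t} _ hlt => ?_⟩
    cases hlt
    exact (opow_pos _ omega0_pos).trans_le le_self_add
  | @omega a b ha hb hge iha ihb =>
    have hb_lt : toOrdinal b < ω ^ (toOrdinal a + 1) := by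
      rcases hge with hlt | heq
      · cases b with
        | zero => exact opow_pos _ omega0_pos
        | omega b₁ b₂ =>
          calc toOrdinal (omega b₁ b₂) < toOrdinal (omega a zero) :=
                ihb.2 (isCNF_omega_zero ha) (.lt2 hlt)
            _ = ω ^ toOrdinal a := add_zero _
            _ ≤ ω ^ (toOrdinal a + 1) := opow_le_opow_right omega0_pos le_self_add
      · exact heq ▸ ihb.1
    have hlead : ω ^ toOrdinal a < ω ^ (toOrdinal a + 1) :=
      (opow_lt_opow_iff_right one_lt_omega0).2 (lt_add_one _)
    have hbound : toOrdinal (omega a b) < ω ^ (toOrdinal a + 1) :=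
      isPrincipal_add_omega0_opow _ hlead hb_lt
    refine ⟨hbound, fun {t} ht hlt => ?_⟩
    cases hlt with
    | @lt2 _ _ c d hac =>
      cases ht with | omega hc _ _ =>
      calc toOrdinal (omega a b) < ω ^ (toOrdinal a + 1) := hbound
        _ ≤ ω ^ toOrdinal c :=
          opow_le_opow_right omega0_pos (Order.add_one_le_of_lt (iha.2 hc hac))
        _ ≤ toOrdinal (omega c d) := le_self_add
    | @lt3 _ _ _ d hac hbd =>
      subst hac
      cases ht with | omega _ hd _ =>
      exact add_lt_add_right (ihb.2 hd hbd) (ω ^ toOrdinal a)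

theorem toOrdinal_lt_toOrdinal {s t : T} (hs : isCNF s) (ht : isCNF t) (h : Lt s t) :
    toOrdinal s < toOrdinal t :=
  (toOrdinal_lt_and_lt_of_isCNF hs).2 ht h

end CNFOrd.T

open CNFOrd T in
/-- there is no strictly descending sequence of Cantor normal forms. -/
theorem no_strictly_descending :
    ¬ ∃ f : ℕ → {t : T // isCNF t}, ∀ i, Lt (f (i + 1)).val (f i).val := by
  rintro ⟨f, hf⟩
  exact not_strictAnti_of_wellFoundedLT (fun i => toOrdinal (f i).val) <|
    strictAnti_nat_of_succ_lt fun i => toOrdinal_lt_toOrdinal (f (i + 1)).2 (f i).2 (hf i)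
end
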